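/- arXiv:2501.06955 — 6 statements merged into one kernel-verified Lean document; each statement's English description precedes it below -/
import Mathlib

section
/- Let n ≥ 1, let X and Y be objects of D(𝒜) concentrated in [-n+1, 0], and let f : X → Y be a morphism. Then the following are equivalent: (i) there exists a distinguished triangle X →f Y → C → X⟦1⟧ in D(𝒜) whose third object C is concentrated in [-n+1, 0]; (ii) H^{-n+1}(f) is a monomorphism in 𝒜. -/
open CategoryTheory CategoryTheory.Limits CategoryTheory.Pretriangulated

universe w v u

variable {𝒜 : Type u} [Category.{v} 𝒜] [Abelian 𝒜] [HasDerivedCategory.{w} 𝒜]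

/-- An object of the derived category is concentrated in degrees `[-n+1, 0]` if its
homology vanishes in degrees `< -n+1` and `> 0`. -/
def Concentrated (n : ℤ) (X : DerivedCategory 𝒜) : Prop :=
  ∀ i : ℤ, (i < -n + 1 ∨ 0 < i) → IsZero ((DerivedCategory.homologyFunctor 𝒜 i).obj X)

theorem stmt_2 (n : ℤ) (hn : 1 ≤ n) (X Y : DerivedCategory 𝒜)
    (hX : Concentrated n X) (hY : Concentrated n Y) (f : X ⟶ Y) :
    (∃ (C : DerivedCategory 𝒜) (g : Y ⟶ C) (h : C ⟶ X⟦(1 : ℤ)⟧),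
      (Triangle.mk f g h ∈ distTriang (DerivedCategory 𝒜)) ∧ Concentrated n C) ↔
    Mono ((DerivedCategory.homologyFunctor 𝒜 (-n + 1)).map f) := by
  constructor
  · rintro ⟨C, g, h, hT, hC⟩
    exact (DerivedCategory.HomologySequence.mono_homologyMap_mor₁_iff _ hT (-n) (-n+1) rfl).mpr
      ((hC (-n) (Or.inl (by omega))).eq_of_src _ _)
  · intro hf
    obtain ⟨C, g, h, hT⟩ := Pretriangulated.distinguished_cocone_triangle f
    refine ⟨C, g, h, hT, fun i hi => ?_⟩
    refine ((DerivedCategory.HomologySequence.exact₃ _ hT i (i+1) rfl).isZero_X₂_iff).mpr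
      ⟨(hY i hi).eq_of_src _ _, ?_⟩
    rcases hi with hi | hi
    · by_cases h' : i = -n
      · subst h'
        have : Mono ((DerivedCategory.homologyFunctor 𝒜 (-n + 1)).map
          (Triangle.mk f g h).mor₁) := hf
        exact zero_of_comp_mono _
          (DerivedCategory.HomologySequence.δ_comp _ hT (-n) (-n+1) rfl)
      · exact (hX (i+1) (Or.inl (by omega))).eq_of_tgt _ _
    · exact (hX (i+1) (Or.inr (by omega))).eq_of_tgt _ _
end

section
/- Let n ≥ 1, let X and Y be objects of D(𝒜) concentrated in [-n+1, 0], and let f : X → Y be a morphism. Then the following are equivalent: (i) there exists a distinguished triangle W → X →f Y → W⟦1⟧ in D(𝒜) whose first object W is concentrated in [-n+1, 0]; (ii) H^0(f) is an epimorphism in 𝒜. -/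
open CategoryTheory CategoryTheory.Limits CategoryTheory.Pretriangulated

universe w v u

variable {𝒜 : Type u} [Category.{v} 𝒜] [Abelian 𝒜] [HasDerivedCategory.{w} 𝒜]

theorem stmt_3 (n : ℤ) (hn : 1 ≤ n) (X Y : DerivedCategory 𝒜)
    (hX : Concentrated n X) (hY : Concentrated n Y) (f : X ⟶ Y) :
    (∃ (W : DerivedCategory 𝒜) (w : W ⟶ X) (h : Y ⟶ W⟦(1 : ℤ)⟧),
      (Triangle.mk w f h ∈ distTriang (DerivedCategory 𝒜)) ∧ Concentrated n W) ↔
    Epi ((DerivedCategory.homologyFunctor 𝒜 0).map f) := by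
  constructor
  · rintro ⟨W, w, h, hT, hW⟩
    have ex := DerivedCategory.HomologySequence.exact₃ _ hT 0 1 rfl
    have hz : DerivedCategory.HomologySequence.δ (Triangle.mk w f h) 0 1 rfl = 0 :=
      (hW 1 (Or.inr one_pos)).eq_of_tgt _ _
    have := ex.epi_f_iff.mpr hz
    exact this
  · intro hf
    obtain ⟨W, w, h, hT⟩ := distinguished_cocone_triangle₁ f
    refine ⟨W, w, h, hT, fun i hi => ?_⟩
    have ex := DerivedCategory.HomologySequence.exact₁ _ hT (i - 1) i (by ring)
    refine ex.isZero_X₂ ?_ ?_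
    · -- δ : H^{i-1}(Y) ⟶ H^i(W) is zero
      rcases hi with hi | hi
      · exact (hY (i - 1) (Or.inl (by omega))).eq_of_src _ _
      · rcases (by omega : i = 1 ∨ 1 < i) with rfl | hi'
        · have ex3 := DerivedCategory.HomologySequence.exact₃ _ hT 0 1 rfl
          exact ex3.epi_f_iff.mp hf
        · exact (hY (i - 1) (Or.inr (by omega))).eq_of_src _ _
    · -- H^i(W) ⟶ H^i(X) has zero target
      exact (hX i hi).eq_of_tgt _ _
end

section
/- Let n ≥ 1 and let X, Y, X', Y' be objects of D(𝒜) concentrated in [-n+1, 0]. Suppose there is a distinguished triangle X →u Y ⊕ X' →v Y' → X⟦1⟧ in which the two components of u are f : X → Y and a : X → X', and the two components of v are -b : Y → Y' and f' : X' → Y' (so that the square with sides f, a, b, f' is a homotopy pushout square). If H^{-n+1}(f) is a monomorphism in 𝒜, then H^{-n+1}(f') is a monomorphism in 𝒜. -/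
open CategoryTheory CategoryTheory.Limits CategoryTheory.Pretriangulated

universe w v u

variable {𝒜 : Type u} [Category.{v} 𝒜] [Abelian 𝒜] [HasDerivedCategory.{w} 𝒜]

/-! A homological functor sends the homotopy pushout of a morphism `f` to a morphism `f'`
which is injective wherever `f` is: if `f'(x') = 0`, then `(0, x')` is killed by `v`, so by
exactness it is `u(x) = (f(x), a(x))` up to refinement; then `f(x) = 0`, hence `x = 0` and
`x' = 0`. -/

lemma CategoryTheory.ShortComplex.Exact.mono_comp_g {C : Type*} [Category C] [Abelian C]
    {S : ShortComplex C} (hS : S.Exact) {E E' : C} (i : E' ⟶ S.X₂) (g : S.X₂ ⟶ E)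
    [Mono i] [Mono (S.f ≫ g)] (hig : i ≫ g = 0) : Mono (i ≫ S.g) := by
  rw [Preadditive.mono_iff_cancel_zero]
  intro Z t ht
  obtain ⟨Z', π, _, x, hx⟩ := hS.exact_up_to_refinements (t ≫ i) (by simpa using ht)
  have hx0 : x = 0 := by
    rw [← cancel_mono (S.f ≫ g), zero_comp, ← Category.assoc, ← hx]
    simp [hig]
  rw [← cancel_epi π, ← cancel_mono i, Category.assoc, hx, hx0]
  simp

lemma CategoryTheory.Functor.mono_map_of_distTriang_biprod {C A : Type*} [Category C]
    [Preadditive C] [HasZeroObject C] [HasShift C ℤ]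
    [∀ n : ℤ, (shiftFunctor C n).Additive] [Pretriangulated C]
    [Category A] [Abelian A] (F : C ⥤ A) [F.IsHomological]
    {X Y X' Y' : C} {f : X ⟶ Y} {f' : X' ⟶ Y'} {u : X ⟶ Y ⊞ X'} {v : Y ⊞ X' ⟶ Y'}
    (w : Y' ⟶ X⟦(1 : ℤ)⟧) (hu : u ≫ biprod.fst = f) (hv : biprod.inr ≫ v = f')
    (hT : Triangle.mk u v w ∈ distTriang C) [Mono (F.map f)] :
    Mono (F.map f') := by
  have hS : (ShortComplex.mk (F.map u) (F.map v)
      ((shortComplexOfDistTriangle _ hT).map F).zero).Exact :=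
    F.map_distinguished_exact _ hT
  have : Mono (F.map u ≫ F.map biprod.fst) := by rwa [← F.map_comp, hu]
  have := hS.mono_comp_g (F.map biprod.inr) (F.map biprod.fst)
    (by rw [← F.map_comp, biprod.inr_fst, F.map_zero])
  rwa [← hv, F.map_comp]

theorem stmt_6_general (n : ℤ) (X Y X' Y' : DerivedCategory 𝒜)
    (f : X ⟶ Y) (f' : X' ⟶ Y')
    (u : X ⟶ Y ⊞ X') (v : Y ⊞ X' ⟶ Y') (w : Y' ⟶ X⟦(1 : ℤ)⟧)
    (hu₁ : u ≫ biprod.fst = f)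
    (hv₂ : biprod.inr ≫ v = f')
    (hT : Triangle.mk u v w ∈ distTriang (DerivedCategory 𝒜))
    (hf : Mono ((DerivedCategory.homologyFunctor 𝒜 (-n + 1)).map f)) :
    Mono ((DerivedCategory.homologyFunctor 𝒜 (-n + 1)).map f') :=
  (DerivedCategory.homologyFunctor 𝒜 (-n + 1)).mono_map_of_distTriang_biprod w hu₁ hv₂ hT

theorem stmt_6 (n : ℤ) (hn : 1 ≤ n) (X Y X' Y' : DerivedCategory 𝒜)
    (hX : Concentrated n X) (hY : Concentrated n Y)
    (hX' : Concentrated n X') (hY' : Concentrated n Y')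
    (f : X ⟶ Y) (a : X ⟶ X') (b : Y ⟶ Y') (f' : X' ⟶ Y')
    (u : X ⟶ Y ⊞ X') (v : Y ⊞ X' ⟶ Y') (w : Y' ⟶ X⟦(1 : ℤ)⟧)
    (hu₁ : u ≫ biprod.fst = f) (hu₂ : u ≫ biprod.snd = a)
    (hv₁ : biprod.inl ≫ v = -b) (hv₂ : biprod.inr ≫ v = f')
    (hT : Triangle.mk u v w ∈ distTriang (DerivedCategory 𝒜))
    (hf : Mono ((DerivedCategory.homologyFunctor 𝒜 (-n + 1)).map f)) :
    Mono ((DerivedCategory.homologyFunctor 𝒜 (-n + 1)).map f') :=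
  stmt_6_general n X Y X' Y' f f' u v w hu₁ hv₂ hT hf
end

section
/- Let n ≥ 1, let X and Y be objects of D(𝒜) concentrated in [-n+1, 0], and let f : X → Y be any morphism. Then there exist an object Z of D(𝒜) concentrated in [-n+1, 0] and morphisms e : X → Z and m : Z → Y with f = m ∘ e such that: H^{-n+1}(m) is a monomorphism in 𝒜, H^{-n+1}(e) is an epimorphism in 𝒜, and H^i(e) is an isomorphism in 𝒜 for all i ≥ -n+2. (Existence of a [1,n]-factorization.) -/
/-!
Complete `f` to a distinguished triangle `X ⟶ Y ⟶ C ⟶ X⟦1⟧` with third morphism `h`; by the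
long exact homology sequence `C` has homology only in degrees `[-n, 0]`. Let `ι : T ⟶ C` be
the truncation `τ_{≤ -n} C`, so that `T` has homology only in degree `-n`, where `ι` is an
isomorphism, and complete `ι ≫ h : T ⟶ X⟦1⟧` to a distinguished triangle `X ⟶ Z ⟶ T ⟶ X⟦1⟧`.
The homology sequence of this triangle shows that `H^i(e)` is an isomorphism for `i ≥ -n+2`
and an epimorphism for `i = -n+1`, and that `Z` is concentrated in `[-n+1, 0]`: in degree `-n`
because the connecting map `H^{-n}(T) ⟶ H^{-n+1}(X)` factors as `H^{-n}(ι)` followed by the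
(injective) connecting map of `C`. Since `ι ≫ h ≫ f⟦1⟧ = 0`, `f` factors as `e ≫ m`; in degree
`-n+1` the kernel of `H(f)` is the image of the connecting map of `C`, which `H(e)` kills, so
`H(m)` is a monomorphism.
-/

open CategoryTheory CategoryTheory.Limits CategoryTheory.Pretriangulated

universe w v u

variable {𝒜 : Type u} [Category.{v} 𝒜] [Abelian 𝒜] [HasDerivedCategory.{w} 𝒜]

lemma CategoryTheory.ShortComplex.Exact.mono_of_epi_of_comp_eq_g {C : Type*} [Category C]
    [Abelian C] {S : ShortComplex C} (hS : S.Exact) {Z : C} (e : S.X₂ ⟶ Z) (he : Epi e)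
    (m : Z ⟶ S.X₃) (hf : S.f ≫ e = 0) (hg : e ≫ m = S.g) : Mono m := by
  refine Preadditive.mono_of_cancel_zero _ fun {W} z hz => ?_
  obtain ⟨W₁, π₁, _, x₂, hx₂⟩ := surjective_up_to_refinements_of_epi e z
  have hx₂g : x₂ ≫ S.g = 0 := by
    rw [← hg, ← Category.assoc, ← hx₂, Category.assoc, hz, comp_zero]
  obtain ⟨W₂, π₂, _, x₁, hx₁⟩ := hS.exact_up_to_refinements x₂ hx₂g
  rw [← cancel_epi (π₂ ≫ π₁), comp_zero]
  calc (π₂ ≫ π₁) ≫ z = (π₂ ≫ x₂) ≫ e := by rw [Category.assoc, hx₂, Category.assoc]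
    _ = 0 := by rw [hx₁, Category.assoc, hf, comp_zero]

namespace CategoryTheory.Pretriangulated

lemma exists_comp_eq_of_distTriang {D : Type*} [Category D] [HasZeroObject D] [HasShift D ℤ]
    [Preadditive D] [∀ n : ℤ, (shiftFunctor D n).Additive] [Pretriangulated D]
    {X Y Z C T : D} {f : X ⟶ Y} {g : Y ⟶ C} {h : C ⟶ X⟦(1 : ℤ)⟧}
    (hC : Triangle.mk f g h ∈ distTriang D) {e : X ⟶ Z} {v : Z ⟶ T} {ι : T ⟶ C}
    (hZ : Triangle.mk e v (ι ≫ h) ∈ distTriang D) : ∃ m : Z ⟶ Y, e ≫ m = f := by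
  obtain ⟨m, hm, -⟩ := complete_distinguished_triangle_morphism₂ _ _ hZ hC (𝟙 X) ι
    ((congrArg _ ((shiftFunctor D (1 : ℤ)).map_id X)).trans (Category.comp_id _))
  exact ⟨m, hm.trans (Category.id_comp f)⟩

end CategoryTheory.Pretriangulated

namespace DerivedCategory

lemma exists_isLE_isIso_homologyMap (K : DerivedCategory 𝒜) (p : ℤ) :
    ∃ (T : DerivedCategory 𝒜) (ι : T ⟶ K), T.IsLE p ∧
      ∀ j ≤ p, IsIso ((homologyFunctor 𝒜 j).map ι) := by
  obtain ⟨L, ⟨α⟩⟩ : ∃ L, Nonempty (Q.obj L ≅ K) := ⟨_, ⟨Q.objObjPreimageIso K⟩⟩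
  refine ⟨Q.obj (L.truncLE p), Q.map (L.ιTruncLE p) ≫ α.hom,
    ⟨⟨_, Iso.refl _, inferInstance⟩⟩, fun j hj => ?_⟩
  have := L.quasiIsoAt_ιTruncLE p j hj
  have : IsIso ((homologyFunctor 𝒜 j).map (Q.map (L.ιTruncLE p))) :=
    (NatIso.isIso_map_iff (homologyFunctorFactors 𝒜 j) _).2
      ((quasiIsoAt_iff_isIso_homologyMap _ _).1 this)
  rw [Functor.map_comp]
  infer_instance

lemma isZero_homology_of_isLE_of_isIso {T K : DerivedCategory 𝒜} (ι : T ⟶ K) (p : ℤ)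
    [T.IsLE p] (hι : ∀ j ≤ p, IsIso ((homologyFunctor 𝒜 j).map ι))
    (hK : ∀ j < p, IsZero ((homologyFunctor 𝒜 j).obj K)) (j : ℤ) (hj : j ≠ p) :
    IsZero ((homologyFunctor 𝒜 j).obj T) := by
  rcases lt_or_gt_of_ne hj with hj | hj
  · have := hι j hj.le
    exact (hK j hj).of_iso (asIso ((homologyFunctor 𝒜 j).map ι))
  · exact (T.isLE_iff p).1 inferInstance j hj

namespace HomologySequence

section

variable (T : Triangle (DerivedCategory 𝒜))

lemma isZero_homology_obj₂ (hT : T ∈ distTriang _) (n : ℤ)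
    (h₁ : IsZero ((homologyFunctor 𝒜 n).obj T.obj₁))
    (h₃ : IsZero ((homologyFunctor 𝒜 n).obj T.obj₃)) :
    IsZero ((homologyFunctor 𝒜 n).obj T.obj₂) :=
  (exact₂ T hT n).isZero_X₂_iff.2 ⟨h₁.eq_of_src _ _, h₃.eq_of_tgt _ _⟩

lemma isZero_homology_obj₃ (hT : T ∈ distTriang _) (n₀ n₁ : ℤ) (h : n₀ + 1 = n₁)
    (h₂ : IsZero ((homologyFunctor 𝒜 n₀).obj T.obj₂))
    (h₁ : IsZero ((homologyFunctor 𝒜 n₁).obj T.obj₁)) :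
    IsZero ((homologyFunctor 𝒜 n₀).obj T.obj₃) :=
  (exact₃ T hT n₀ n₁ h).isZero_X₂_iff.2 ⟨h₂.eq_of_src _ _, h₁.eq_of_tgt _ _⟩

lemma mono_δ (hT : T ∈ distTriang _) (n₀ n₁ : ℤ) (h : n₀ + 1 = n₁)
    (h₂ : IsZero ((homologyFunctor 𝒜 n₀).obj T.obj₂)) : Mono (δ T n₀ n₁ h) :=
  (exact₃ T hT n₀ n₁ h).mono_g (h₂.eq_of_src _ _)

lemma isZero_homology_obj₂_of_mono_δ (hT : T ∈ distTriang _) (n₀ n₁ : ℤ) (h : n₀ + 1 = n₁)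
    [Mono (δ T n₀ n₁ h)] (h₁ : IsZero ((homologyFunctor 𝒜 n₀).obj T.obj₁)) :
    IsZero ((homologyFunctor 𝒜 n₀).obj T.obj₂) := by
  have := (mono_homologyMap_mor₂_iff T hT n₀).2 (h₁.eq_of_src _ _)
  exact IsZero.of_mono_eq_zero ((homologyFunctor 𝒜 n₀).map T.mor₂)
    ((cancel_mono (δ T n₀ n₁ h)).1 (by rw [comp_δ T hT n₀ n₁ h, zero_comp]))

end

lemma δ_mk_comp {X Y Z T C : DerivedCategory 𝒜} (e : X ⟶ Z) (v : Z ⟶ T) (ι : T ⟶ C)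
    (f : X ⟶ Y) (g : Y ⟶ C) (h : C ⟶ X⟦(1 : ℤ)⟧) (n₀ n₁ : ℤ) (hn : n₀ + 1 = n₁) :
    δ (Triangle.mk e v (ι ≫ h)) n₀ n₁ hn =
      (homologyFunctor 𝒜 n₀).map ι ≫ δ (Triangle.mk f g h) n₀ n₁ hn :=
  (homologyFunctor 𝒜 0).shiftMap_comp' _ _ _ _ _

section

variable {X Y Z C T : DerivedCategory 𝒜} {f : X ⟶ Y} {g : Y ⟶ C} {h : C ⟶ X⟦(1 : ℤ)⟧}
  {ι : T ⟶ C} {e : X ⟶ Z} {v : Z ⟶ T} (n₀ n₁ : ℤ)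

lemma mono_δ_mk_comp (hn : n₀ + 1 = n₁) (hC : Triangle.mk f g h ∈ distTriang _)
    (hY : IsZero ((homologyFunctor 𝒜 n₀).obj Y)) [Mono ((homologyFunctor 𝒜 n₀).map ι)] :
    Mono (δ (Triangle.mk e v (ι ≫ h)) n₀ n₁ hn) := by
  rw [δ_mk_comp e v ι f g h]
  exact mono_comp' (inferInstanceAs (Mono ((homologyFunctor 𝒜 n₀).map ι)))
    (mono_δ _ hC n₀ n₁ hn hY)

lemma δ_comp_homologyMap_eq_zero (hn : n₀ + 1 = n₁) (hZ : Triangle.mk e v (ι ≫ h) ∈ distTriang _)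
    [Epi ((homologyFunctor 𝒜 n₀).map ι)] :
    δ (Triangle.mk f g h) n₀ n₁ hn ≫ (homologyFunctor 𝒜 n₁).map e = 0 := by
  have h₀ := δ_comp _ hZ n₀ n₁ hn
  rw [δ_mk_comp e v ι f g h] at h₀
  exact (cancel_epi ((homologyFunctor 𝒜 n₀).map ι)).1
    ((Category.assoc _ _ _).symm.trans (h₀.trans comp_zero.symm))

lemma mono_homologyMap_of_comp_eq (hn : n₀ + 1 = n₁) (hC : Triangle.mk f g h ∈ distTriang _)
    (hZ : Triangle.mk e v (ι ≫ h) ∈ distTriang _) [Epi ((homologyFunctor 𝒜 n₀).map ι)]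
    (he : Epi ((homologyFunctor 𝒜 n₁).map e)) {m : Z ⟶ Y} (hm : e ≫ m = f) :
    Mono ((homologyFunctor 𝒜 n₁).map m) :=
  (exact₁ _ hC n₀ n₁ hn).mono_of_epi_of_comp_eq_g _ he _
    (δ_comp_homologyMap_eq_zero n₀ n₁ hn hZ)
    ((Functor.map_comp _ _ _).symm.trans (congrArg _ hm))

end

end HomologySequence

end DerivedCategory

open DerivedCategory HomologySequence in
theorem stmt_7_general (n : ℤ) (X Y : DerivedCategory 𝒜)
    (hX : Concentrated n X) (hY : Concentrated n Y) (f : X ⟶ Y) :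
    ∃ (Z : DerivedCategory 𝒜) (e : X ⟶ Z) (m : Z ⟶ Y),
      Concentrated n Z ∧ e ≫ m = f ∧
      Mono ((DerivedCategory.homologyFunctor 𝒜 (-n + 1)).map m) ∧
      Epi ((DerivedCategory.homologyFunctor 𝒜 (-n + 1)).map e) ∧
      ∀ i : ℤ, -n + 2 ≤ i → IsIso ((DerivedCategory.homologyFunctor 𝒜 i).map e) := by
  obtain ⟨C, g, h, hC⟩ := distinguished_cocone_triangle f
  obtain ⟨T, ι, hT_le, hι⟩ := C.exists_isLE_isIso_homologyMap (-n)
  obtain ⟨Z, e, v, hZ⟩ := distinguished_cocone_triangle₂ (ι ≫ h)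
  obtain ⟨m, hem⟩ := exists_comp_eq_of_distTriang hC hZ
  have hT : ∀ j ≠ -n, IsZero ((homologyFunctor 𝒜 j).obj T) :=
    isZero_homology_of_isLE_of_isIso ι (-n) hι fun j hj =>
      isZero_homology_obj₃ _ hC j (j + 1) rfl (hY j (by omega)) (hX (j + 1) (by omega))
  have he_epi : ∀ i ≠ -n, Epi ((homologyFunctor 𝒜 i).map e) := fun i hi =>
    (epi_homologyMap_mor₁_iff _ hZ i).2 ((hT i hi).eq_of_tgt _ _)
  have he_mono : ∀ i ≠ -n + 1, Mono ((homologyFunctor 𝒜 i).map e) := fun i hi =>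
    (mono_homologyMap_mor₁_iff _ hZ (i - 1) i (by omega)).2 ((hT _ (by omega)).eq_of_src _ _)
  have := hι (-n) le_rfl
  refine ⟨Z, e, m, fun i hi => ?_, hem,
    mono_homologyMap_of_comp_eq _ _ rfl hC hZ (he_epi _ (by omega)) hem,
    he_epi _ (by omega), fun i hi => ?_⟩
  · by_cases hin : i = -n
    · subst hin
      have := mono_δ_mk_comp (e := e) (v := v) (ι := ι) _ _ rfl hC (hY _ (by omega))
      exact isZero_homology_obj₂_of_mono_δ _ hZ _ (-n + 1) rfl (hX _ hi)
    · exact isZero_homology_obj₂ _ hZ i (hX i hi) (hT i hin)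
  · have := he_epi i (by omega)
    have := he_mono i (by omega)
    exact isIso_of_mono_of_epi _

theorem stmt_7 (n : ℤ) (hn : 1 ≤ n) (X Y : DerivedCategory 𝒜)
    (hX : Concentrated n X) (hY : Concentrated n Y) (f : X ⟶ Y) :
    ∃ (Z : DerivedCategory 𝒜) (e : X ⟶ Z) (m : Z ⟶ Y),
      Concentrated n Z ∧ e ≫ m = f ∧
      Mono ((DerivedCategory.homologyFunctor 𝒜 (-n + 1)).map m) ∧
      Epi ((DerivedCategory.homologyFunctor 𝒜 (-n + 1)).map e) ∧
      ∀ i : ℤ, -n + 2 ≤ i → IsIso ((DerivedCategory.homologyFunctor 𝒜 i).map e) :=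
  stmt_7_general n X Y hX hY f
end

section
/- Let n ≥ 1, let X, Z, Y be objects of D(𝒜) concentrated in [-n+1, 0], and let f = m ∘ e be a [1,n]-factorization of f : X → Y with e : X → Z and m : Z → Y. Choose distinguished triangles X →f Y →c_f C_f → X⟦1⟧ and Z →m Y →c_m C_m → Z⟦1⟧. Then there exists a morphism u : C_f → C_m with u ∘ c_f = c_m such that H^i(u) is an isomorphism in 𝒜 for all i ≥ -n+1. (The homotopy cokernel of m is naturally equivalent to the homotopy cokernel of f.) -/
open CategoryTheory CategoryTheory.Limits CategoryTheory.Pretriangulated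

universe w v u

variable {𝒜 : Type u} [Category.{v} 𝒜] [Abelian 𝒜] [HasDerivedCategory.{w} 𝒜]

theorem stmt_10 (n : ℤ) (hn : 1 ≤ n) (X Z Y : DerivedCategory 𝒜)
    (hX : Concentrated n X) (hZ : Concentrated n Z) (hY : Concentrated n Y)
    (f : X ⟶ Y) (e : X ⟶ Z) (m : Z ⟶ Y) (hfac : e ≫ m = f)
    (hm : Mono ((DerivedCategory.homologyFunctor 𝒜 (-n + 1)).map m))
    (he : Epi ((DerivedCategory.homologyFunctor 𝒜 (-n + 1)).map e))
    (he' : ∀ i : ℤ, -n + 2 ≤ i → IsIso ((DerivedCategory.homologyFunctor 𝒜 i).map e))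
    (Cf Cm : DerivedCategory 𝒜)
    (cf : Y ⟶ Cf) (df : Cf ⟶ X⟦(1 : ℤ)⟧)
    (cm : Y ⟶ Cm) (dm : Cm ⟶ Z⟦(1 : ℤ)⟧)
    (hTf : Triangle.mk f cf df ∈ distTriang (DerivedCategory 𝒜))
    (hTm : Triangle.mk m cm dm ∈ distTriang (DerivedCategory 𝒜)) :
    ∃ u : Cf ⟶ Cm, cf ≫ u = cm ∧
      ∀ i : ℤ, -n + 1 ≤ i → IsIso ((DerivedCategory.homologyFunctor 𝒜 i).map u) := by
  obtain ⟨Ce, ce, de, hTe⟩ := Pretriangulated.distinguished_cocone_triangle e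
  let O := Triangulated.someOctahedron hfac hTe hTm hTf
  -- `e` induces an epi on `H^i` for all `i ≥ -n+1`
  have heEpi : ∀ i : ℤ, -n + 1 ≤ i → Epi ((DerivedCategory.homologyFunctor 𝒜 i).map e) := by
    intro i hi
    rcases hi.lt_or_eq with h | h
    · have := he' i (by omega)
      infer_instance
    · subst h; exact he
  -- the homology of the cone of `e` vanishes in degrees `≥ -n+1`
  have hCe : ∀ i : ℤ, -n + 1 ≤ i → IsZero ((DerivedCategory.homologyFunctor 𝒜 i).obj Ce) := by
    intro i hi
    -- the connecting map `H^i(Ce) ⟶ H^{i+1}(X)` is zero since `H^{i+1}(e)` is mono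
    have hmono : Mono ((DerivedCategory.homologyFunctor 𝒜 (i + 1)).map e) := by
      have := he' (i + 1) (by omega)
      infer_instance
    have hδ : DerivedCategory.HomologySequence.δ (Triangle.mk e ce de) i (i + 1) rfl = 0 :=
      (DerivedCategory.HomologySequence.mono_homologyMap_mor₁_iff
        (Triangle.mk e ce de) hTe i (i + 1) rfl).mp hmono
    -- `H^i(ce)` is epi (exactness at `H^i(Ce)` with zero connecting map)
    have hepi : Epi ((DerivedCategory.homologyFunctor 𝒜 i).map ce) :=
      ((DerivedCategory.HomologySequence.exact₃ (Triangle.mk e ce de) hTe i (i + 1)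
        rfl).epi_f_iff).mpr hδ
    -- `H^i(ce) = 0` since `H^i(e)` is epi
    have hzero : (DerivedCategory.homologyFunctor 𝒜 i).map ce = 0 :=
      (DerivedCategory.HomologySequence.epi_homologyMap_mor₁_iff
        (Triangle.mk e ce de) hTe i).mp (heEpi i hi)
    exact IsZero.of_epi_eq_zero _ hzero
  refine ⟨O.m₃, O.comm₃, ?_⟩
  intro i hi
  -- the triangle `Ce ⟶ Cf ⟶ Cm ⟶ Ce⟦1⟧`
  have hT : Triangle.mk O.m₁ O.m₃ (dm ≫ ce⟦(1 : ℤ)⟧') ∈ distTriang (DerivedCategory 𝒜) :=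
    O.mem
  have hmono : Mono ((DerivedCategory.homologyFunctor 𝒜 i).map O.m₃) :=
    ((DerivedCategory.HomologySequence.exact₂ (Triangle.mk O.m₁ O.m₃
      (dm ≫ ce⟦(1 : ℤ)⟧')) hT i).mono_g_iff).mpr ((hCe i hi).eq_of_src _ _)
  have hepi : Epi ((DerivedCategory.homologyFunctor 𝒜 i).map O.m₃) :=
    ((DerivedCategory.HomologySequence.exact₃ (Triangle.mk O.m₁ O.m₃
      (dm ≫ ce⟦(1 : ℤ)⟧')) hT i (i + 1) rfl).epi_f_iff).mpr ((hCe (i + 1) (by omega)).eq_of_tgt _ _)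
  exact isIso_of_mono_of_epi _
end

section
/- Let n ≥ 1, let X and Y be objects of D(𝒜) concentrated in [-n+1, 0], let f : X → Y be a morphism, and let f = m ∘ e (with e : X → Z, m : Z → Y) be a [1,n]-factorization of f. Then: (a) H^{-n+1}(f) is a monomorphism in 𝒜 if and only if e is an isomorphism in D(𝒜); (b) H^{-n+1}(f) is an epimorphism in 𝒜 and H^i(f) is an isomorphism in 𝒜 for all i ≥ -n+2 if and only if m is an isomorphism in D(𝒜). -/
/-!
Below degree `-n+1` all homology vanishes, and a morphism of the derived category is an
isomorphism as soon as it induces isomorphisms on all homology objects. In degree `-n+1` the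
factorization `H(f) = H(e) ≫ H(m)` with `H(e)` epi and `H(m)` mono shows that `H(e)` is mono
iff `H(f)` is, and `H(m)` is epi iff `H(f)` is; in degrees `≥ -n+2`, `H(e)` is already an
isomorphism.
-/

open CategoryTheory CategoryTheory.Limits CategoryTheory.Pretriangulated

universe w v u

variable {𝒜 : Type u} [Category.{v} 𝒜] [Abelian 𝒜] [HasDerivedCategory.{w} 𝒜]

open DerivedCategory

theorem Concentrated.isZero_homology_of_lt {n : ℤ} {X : DerivedCategory 𝒜}
    (hX : Concentrated n X) {i : ℤ} (hi : i < -n + 1) :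
    IsZero ((homologyFunctor 𝒜 i).obj X) :=
  hX i (Or.inl hi)

theorem DerivedCategory.isIso_of_isIso_homology_of_ge {A B : DerivedCategory 𝒜} (k : ℤ)
    (g : A ⟶ B) (hA : ∀ i < k, IsZero ((homologyFunctor 𝒜 i).obj A))
    (hB : ∀ i < k, IsZero ((homologyFunctor 𝒜 i).obj B))
    (hg : ∀ i, k ≤ i → IsIso ((homologyFunctor 𝒜 i).map g)) : IsIso g := by
  rw [DerivedCategory.isIso_iff]
  intro i
  rcases lt_or_ge i k with hi | hi
  · exact (hA i hi).isIso (hB i hi) _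
  · exact hg i hi

theorem stmt_13_general (n : ℤ) (X Y Z : DerivedCategory 𝒜)
    (hX : Concentrated n X) (hY : Concentrated n Y) (hZ : Concentrated n Z)
    (f : X ⟶ Y) (e : X ⟶ Z) (m : Z ⟶ Y) (hfac : e ≫ m = f)
    (hm : Mono ((DerivedCategory.homologyFunctor 𝒜 (-n + 1)).map m))
    (he : Epi ((DerivedCategory.homologyFunctor 𝒜 (-n + 1)).map e))
    (he' : ∀ i : ℤ, -n + 2 ≤ i → IsIso ((DerivedCategory.homologyFunctor 𝒜 i).map e)) :
    (Mono ((DerivedCategory.homologyFunctor 𝒜 (-n + 1)).map f) ↔ IsIso e) ∧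
    ((Epi ((DerivedCategory.homologyFunctor 𝒜 (-n + 1)).map f) ∧
      ∀ i : ℤ, -n + 2 ≤ i → IsIso ((DerivedCategory.homologyFunctor 𝒜 i).map f)) ↔
        IsIso m) := by
  subst hfac
  simp only [Functor.map_comp]
  refine ⟨⟨fun hf ↦ ?_, fun _ ↦ inferInstance⟩,
    ⟨fun ⟨hf, hf'⟩ ↦ ?_, fun _ ↦ ⟨inferInstance, fun i hi ↦ have := he' i hi; inferInstance⟩⟩⟩
  · refine isIso_of_isIso_homology_of_ge (-n + 1) e (fun _ ↦ hX.isZero_homology_of_lt)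
      (fun _ ↦ hZ.isZero_homology_of_lt) fun i hi ↦ ?_
    rcases hi.eq_or_lt with rfl | hi
    · have := mono_of_mono ((homologyFunctor 𝒜 (-n + 1)).map e)
        ((homologyFunctor 𝒜 (-n + 1)).map m)
      exact isIso_of_mono_of_epi _
    · exact he' i (by omega)
  · refine isIso_of_isIso_homology_of_ge (-n + 1) m (fun _ ↦ hZ.isZero_homology_of_lt)
      (fun _ ↦ hY.isZero_homology_of_lt) fun i hi ↦ ?_
    rcases hi.eq_or_lt with rfl | hi
    · have := epi_of_epi ((homologyFunctor 𝒜 (-n + 1)).map e)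
        ((homologyFunctor 𝒜 (-n + 1)).map m)
      exact isIso_of_mono_of_epi _
    · have := he' i (by omega)
      have := hf' i (by omega)
      exact IsIso.of_isIso_comp_left ((homologyFunctor 𝒜 i).map e) _

theorem stmt_13 (n : ℤ) (hn : 1 ≤ n) (X Y Z : DerivedCategory 𝒜)
    (hX : Concentrated n X) (hY : Concentrated n Y) (hZ : Concentrated n Z)
    (f : X ⟶ Y) (e : X ⟶ Z) (m : Z ⟶ Y) (hfac : e ≫ m = f)
    (hm : Mono ((DerivedCategory.homologyFunctor 𝒜 (-n + 1)).map m))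
    (he : Epi ((DerivedCategory.homologyFunctor 𝒜 (-n + 1)).map e))
    (he' : ∀ i : ℤ, -n + 2 ≤ i → IsIso ((DerivedCategory.homologyFunctor 𝒜 i).map e)) :
    (Mono ((DerivedCategory.homologyFunctor 𝒜 (-n + 1)).map f) ↔ IsIso e) ∧
    ((Epi ((DerivedCategory.homologyFunctor 𝒜 (-n + 1)).map f) ∧
      ∀ i : ℤ, -n + 2 ≤ i → IsIso ((DerivedCategory.homologyFunctor 𝒜 i).map f)) ↔
        IsIso m) :=
  stmt_13_general n X Y Z hX hY hZ f e m hfac hm he he'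
end
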